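/- Let m ≥ 1 be an integer and 0 < a < 1. Define Φ_{S3}(m,a;t) = 4π² cosh(t/4) (4 cosh²(t/m) − 4a²)^m e^{−2π cosh t}. Then lim_{t→+∞} Φ_{S3}(m,a;t)/Φ(t) = 1, where Φ(t) = Σ_{n=1}^{∞} (2π² n⁴ e^{9t/4} − 3π n² e^{5t/4}) e^{−π n² e^t}. -/

import Mathlib

/-!
Both kernels are asymptotic to `2π² e^{9t/4 - π e^t}`. For `Φ_{S3}` this follows from
`cosh s ~ e^s / 2` at `s = t/4` and `s = t/m`, together with `-2π cosh t = -π e^t - π e^{-t}`.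
For `Φ`, multiplying the `n`-th term by `e^{π e^t - 9t/4}` turns it into
`(2π²(n+1)⁴ - 3π(n+1)² e^{-t}) q^{n(n+2)}` with `q = e^{-π e^t} → 0`; for `t ≥ 0` these are
dominated by `5π²(n+1)⁴ e^{-πn}`, so by Tannery's theorem only the term `n = 0` survives.
-/

open Real Filter

/-- The Riemann xi kernel
`Φ(t) = ∑_{n=1}^{∞} (2π² n⁴ e^{9t/4} − 3π n² e^{5t/4}) e^{−π n² e^t}`. -/
noncomputable def Phi (t : ℝ) : ℝ :=
  ∑' n : ℕ,
    (2 * π ^ 2 * (n + 1 : ℝ) ^ 4 * exp (9 * t / 4)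
      - 3 * π * (n + 1 : ℝ) ^ 2 * exp (5 * t / 4)) * exp (-π * (n + 1 : ℝ) ^ 2 * exp t)

/-- The approximating kernel
`Φ_{S3}(m,a;t) = 4π² cosh(t/4) (4 cosh²(t/m) − 4a²)^m e^{−2π cosh t}`. -/
noncomputable def PhiS3 (m : ℕ) (a t : ℝ) : ℝ :=
  4 * π ^ 2 * cosh (t / 4) * (4 * cosh (t / m) ^ 2 - 4 * a ^ 2) ^ m * exp (-2 * π * cosh t)

open Topology

lemma summable_add_one_pow_mul_geometric (k : ℕ) {r : ℝ} (hr : ‖r‖ < 1) :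
    Summable fun n : ℕ => ((n : ℝ) + 1) ^ k * r ^ n := by
  simp_rw [add_pow, one_pow, mul_one, Finset.sum_mul]
  exact summable_sum fun j _ => by
    simpa only [mul_right_comm] using
      (summable_pow_mul_geometric_of_norm_lt_one j hr).mul_right (k.choose j : ℝ)

lemma cosh_mul_exp_neg (s : ℝ) : cosh s * exp (-s) = (1 + exp (-s) ^ 2) / 2 := by
  rw [cosh_eq, exp_neg]
  field_simp

lemma tendsto_cosh_mul_exp_neg : Tendsto (fun s => cosh s * exp (-s)) atTop (𝓝 (1 / 2)) := by
  simp_rw [cosh_mul_exp_neg]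
  simpa using ((tendsto_exp_neg_atTop_nhds_zero.pow 2).const_add 1).div_const 2

lemma PhiS3_mul_exp_eq {m : ℕ} (hm : m ≠ 0) (a t : ℝ) :
    PhiS3 m a t * exp (π * exp t - 9 * t / 4) =
      4 * π ^ 2 * (cosh (t / 4) * exp (-(t / 4))) *
        (4 * (cosh (t / m) * exp (-(t / m))) ^ 2 - 4 * a ^ 2 * exp (-(t / m)) ^ 2) ^ m *
        exp (-π * exp (-t)) := by
  have hexp : exp (-2 * π * cosh t) * exp (π * exp t - 9 * t / 4) =
      exp (-(t / 4)) * (exp (-(t / m)) ^ 2) ^ m * exp (-π * exp (-t)) := by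
    rw [← pow_mul, ← exp_nat_mul, ← exp_add, ← exp_add, ← exp_add, cosh_eq]
    congr 1
    push_cast
    field_simp
    ring
  rw [show 4 * (cosh (t / m) * exp (-(t / m))) ^ 2 - 4 * a ^ 2 * exp (-(t / m)) ^ 2 =
      (4 * cosh (t / m) ^ 2 - 4 * a ^ 2) * exp (-(t / m)) ^ 2 by ring, mul_pow, PhiS3]
  linear_combination 4 * π ^ 2 * cosh (t / 4) * (4 * cosh (t / m) ^ 2 - 4 * a ^ 2) ^ m * hexp

lemma tendsto_PhiS3_mul_exp {m : ℕ} (hm : m ≠ 0) (a : ℝ) :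
    Tendsto (fun t => PhiS3 m a t * exp (π * exp t - 9 * t / 4)) atTop (𝓝 (2 * π ^ 2)) := by
  have hm' : (0 : ℝ) < m := by positivity
  have h4 := tendsto_cosh_mul_exp_neg.comp (tendsto_id.atTop_div_const (by norm_num : (0 : ℝ) < 4))
  have hcm := tendsto_cosh_mul_exp_neg.comp (tendsto_id.atTop_div_const hm')
  have hem := tendsto_exp_neg_atTop_nhds_zero.comp (tendsto_id.atTop_div_const hm')
  have hpi : Tendsto (fun t => exp (-π * exp (-t))) atTop (𝓝 1) := by
    simpa using (tendsto_exp_neg_atTop_nhds_zero.const_mul (-π)).rexp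
  have := ((h4.const_mul (4 * π ^ 2)).mul
    ((((hcm.pow 2).const_mul 4).sub ((hem.pow 2).const_mul (4 * a ^ 2))).pow m)).mul hpi
  simp_rw [PhiS3_mul_exp_eq hm]
  convert this using 2
  norm_num
  ring

lemma Phi_term_mul_exp_eq (t : ℝ) (n : ℕ) :
    (2 * π ^ 2 * (n + 1 : ℝ) ^ 4 * exp (9 * t / 4)
      - 3 * π * (n + 1 : ℝ) ^ 2 * exp (5 * t / 4)) * exp (-π * (n + 1 : ℝ) ^ 2 * exp t) *
        exp (π * exp t - 9 * t / 4) =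
      (2 * π ^ 2 * (n + 1 : ℝ) ^ 4 - 3 * π * (n + 1 : ℝ) ^ 2 * exp (-t)) *
        exp (-π * exp t) ^ (n * (n + 2)) := by
  have h1 : exp (-π * (n + 1 : ℝ) ^ 2 * exp t) * exp (π * exp t - 9 * t / 4) =
      exp ((n * (n + 2) : ℕ) * (-π * exp t)) * exp (-(9 * t / 4)) := by
    rw [← exp_add, ← exp_add]
    push_cast
    ring_nf
  have h9 : exp (9 * t / 4) * exp (-(9 * t / 4)) = 1 := by rw [← exp_add]; simp
  have h5 : exp (5 * t / 4) * exp (-(9 * t / 4)) = exp (-t) := by rw [← exp_add]; ring_nf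
  rw [← exp_nat_mul]
  linear_combination (2 * π ^ 2 * (n + 1 : ℝ) ^ 4 * exp (9 * t / 4)
      - 3 * π * (n + 1 : ℝ) ^ 2 * exp (5 * t / 4)) * h1
    + 2 * π ^ 2 * (n + 1 : ℝ) ^ 4 * exp ((n * (n + 2) : ℕ) * (-π * exp t)) * h9
    - 3 * π * (n + 1 : ℝ) ^ 2 * exp ((n * (n + 2) : ℕ) * (-π * exp t)) * h5

lemma Phi_mul_exp_eq (t : ℝ) :
    Phi t * exp (π * exp t - 9 * t / 4) = ∑' n : ℕ,
      (2 * π ^ 2 * (n + 1 : ℝ) ^ 4 - 3 * π * (n + 1 : ℝ) ^ 2 * exp (-t)) *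
        exp (-π * exp t) ^ (n * (n + 2)) := by
  simp_rw [Phi, ← tsum_mul_right, Phi_term_mul_exp_eq]

lemma abs_Phi_term_mul_exp_le {t : ℝ} (ht : 0 ≤ t) (n : ℕ) :
    |(2 * π ^ 2 * (n + 1 : ℝ) ^ 4 - 3 * π * (n + 1 : ℝ) ^ 2 * exp (-t)) *
        exp (-π * exp t) ^ (n * (n + 2))| ≤ 5 * π ^ 2 * ((n + 1 : ℝ) ^ 4 * exp (-π) ^ n) := by
  have hk24 : (n + 1 : ℝ) ^ 2 ≤ (n + 1 : ℝ) ^ 4 := pow_le_pow_right₀ (by simp) (by norm_num)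
  have hπ : π ≤ π ^ 2 := by nlinarith [pi_gt_three]
  have het : exp (-t) ≤ 1 := exp_le_one_iff.2 (neg_nonpos.2 ht)
  have hcoef : |2 * π ^ 2 * (n + 1 : ℝ) ^ 4 - 3 * π * (n + 1 : ℝ) ^ 2 * exp (-t)| ≤
      5 * π ^ 2 * (n + 1 : ℝ) ^ 4 := by
    have h3 : 3 * π * (n + 1 : ℝ) ^ 2 * exp (-t) ≤ 3 * π ^ 2 * (n + 1 : ℝ) ^ 4 :=
      calc 3 * π * (n + 1 : ℝ) ^ 2 * exp (-t) ≤ 3 * π * (n + 1 : ℝ) ^ 2 := by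
            simpa using mul_le_mul_of_nonneg_left het (by positivity)
        _ ≤ 3 * π ^ 2 * (n + 1 : ℝ) ^ 4 := by gcongr
    have h0 : 0 ≤ 3 * π * (n + 1 : ℝ) ^ 2 * exp (-t) := by positivity
    have h0' : 0 ≤ π ^ 2 * (n + 1 : ℝ) ^ 4 := by positivity
    rw [abs_le]
    constructor <;> linarith
  have hq : exp (-π * exp t) ^ (n * (n + 2)) ≤ exp (-π) ^ n :=
    calc exp (-π * exp t) ^ (n * (n + 2)) ≤ exp (-π * exp t) ^ n :=
          pow_le_pow_of_le_one (exp_nonneg _)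
            (exp_le_one_iff.2 (by nlinarith [exp_pos t, pi_pos])) (by nlinarith)
      _ ≤ exp (-π) ^ n :=
          pow_le_pow_left₀ (exp_nonneg _) (exp_le_exp.2 (by nlinarith [one_le_exp ht, pi_pos])) n
  rw [abs_mul, abs_of_nonneg (pow_nonneg (exp_nonneg _) _), ← mul_assoc]
  exact mul_le_mul hcoef hq (by positivity) (by positivity)

lemma tendsto_Phi_mul_exp :
    Tendsto (fun t => Phi t * exp (π * exp t - 9 * t / 4)) atTop (𝓝 (2 * π ^ 2)) := by
  have hq : Tendsto (fun t => exp (-π * exp t)) atTop (𝓝 0) :=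
    tendsto_exp_atBot.comp (tendsto_exp_atTop.const_mul_atTop_of_neg (neg_lt_zero.2 pi_pos))
  have hterm (n : ℕ) : Tendsto (fun t => (2 * π ^ 2 * (n + 1 : ℝ) ^ 4 -
      3 * π * (n + 1 : ℝ) ^ 2 * exp (-t)) * exp (-π * exp t) ^ (n * (n + 2))) atTop
      (𝓝 (2 * π ^ 2 * (n + 1 : ℝ) ^ 4 * 0 ^ (n * (n + 2)))) := by
    simpa using (tendsto_const_nhds.sub (tendsto_exp_neg_atTop_nhds_zero.const_mul _)).mul
      (hq.pow (n * (n + 2)))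
  have hbound := (summable_add_one_pow_mul_geometric 4 (r := exp (-π))
    (by rw [norm_of_nonneg (exp_nonneg _), exp_lt_one_iff]; linarith [pi_pos])).mul_left (5 * π ^ 2)
  have hlim := tendsto_tsum_of_dominated_convergence hbound hterm
    ((eventually_ge_atTop 0).mono fun t ht n => abs_Phi_term_mul_exp_le ht n)
  simp_rw [Phi_mul_exp_eq]
  rw [tsum_eq_single 0 fun n hn => by simp [hn]] at hlim
  simpa using hlim

theorem PhiS3_asymptotic_Phi_general (m : ℕ) (hm : 1 ≤ m) (a : ℝ) :
    Tendsto (fun t : ℝ => PhiS3 m a t / Phi t) atTop (nhds 1) := by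
  have h := (tendsto_PhiS3_mul_exp (by omega : m ≠ 0) a).div tendsto_Phi_mul_exp (by positivity)
  rw [div_self (by positivity)] at h
  exact h.congr fun t => mul_div_mul_right _ _ (exp_ne_zero _)

/-- **Theorem 3(A) of the paper.** For `m ≥ 1` and `0 < a < 1`,
`Φ_{S3}(m,a;t)/Φ(t) → 1` as `t → +∞`. -/
theorem PhiS3_asymptotic_Phi (m : ℕ) (hm : 1 ≤ m) (a : ℝ) (ha0 : 0 < a) (ha1 : a < 1) :
    Tendsto (fun t : ℝ => PhiS3 m a t / Phi t) atTop (nhds 1) :=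
  PhiS3_asymptotic_Phi_general m hm a
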